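/- For every u ∈ ℝ one has y(−u) = −y(u), y(2K − u) = y(u), and y(u + 4K) = y(u); that is, y is odd, symmetric about K on a half period, and periodic with period 4K. -/

import Mathlib

/-!
The energy `y'² + y⁴` is conserved, so `|y| ≤ 1`; there the vector field `(y, y') ↦ (y', -2y³)`
is Lipschitz and solutions are determined by their value at one time. Hence `y` is odd about
each of its zeros and even about each of its critical points. Writing `y = sin φ`, the energy
identity becomes `φ' = √(1 + sin² φ)` as long as `y' > 0`, so `y` first reaches a critical
point, where `y = 1`, at time `∫₀^{π/2} dθ/√(1 + sin²θ) = K`. Oddness about `0` and evenness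
about `K` make `y` antiperiodic with antiperiod `2K`.
-/

open Real Set

def snField (p : ℝ × ℝ) : ℝ × ℝ := (p.2, -2 * p.1 ^ 3)

lemma lipschitzOnWith_snField : LipschitzOnWith 6 snField (Icc (-1) 1 ×ˢ univ) := by
  have hcube : LipschitzOnWith 6 (fun x : ℝ => -2 * x ^ 3) (Icc (-1) 1) := by
    refine (convex_Icc _ _).lipschitzOnWith_of_nnnorm_hasDerivWithin_le
      (fun x _ => ((hasDerivAt_pow 3 x).const_mul (-2)).hasDerivWithinAt) fun x hx => ?_
    rw [← NNReal.coe_le_coe, coe_nnnorm, Real.norm_eq_abs]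
    have : x ^ 2 ≤ 1 := sq_le_one_iff_abs_le_one x |>.mpr (abs_le.mpr hx)
    rw [abs_le]
    constructor <;> push_cast <;> nlinarith
  have hfst : LipschitzOnWith (6 * 1) (fun p : ℝ × ℝ => -2 * p.1 ^ 3) (Icc (-1) 1 ×ˢ univ) :=
    hcube.comp LipschitzWith.prod_fst.lipschitzOnWith fun p hp => (mem_prod.mp hp).1
  exact (LipschitzWith.prod_snd.lipschitzOnWith.prodMk hfst).weaken (by norm_num)

lemma Function.antiperiodic_of_apply_two_mul_sub {α β : Type*} [Ring α] [Neg β] {f : α → β}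
    {a b : α} (ha : ∀ u, f (2 * a - u) = -f u) (hb : ∀ u, f (2 * b - u) = f u) :
    Function.Antiperiodic f (2 * (b - a)) := fun u => by
  rw [show u + 2 * (b - a) = 2 * b - (2 * a - u) by noncomm_ring, hb, ha]

lemma exists_first_zero {g : ℝ → ℝ} (hg : Continuous g) {a b : ℝ} (hab : a ≤ b) (ha : 0 < g a)
    (hb : g b ≤ 0) : ∃ T ∈ Ioc a b, g T = 0 ∧ ∀ u ∈ Ico a T, 0 < g u := by
  have hzero : ∀ c, a ≤ c → g c ≤ 0 → ∃ v ∈ Icc a c, g v = 0 := fun c hc hgc =>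
    intermediate_value_Icc' hc hg.continuousOn ⟨hgc, ha.le⟩
  obtain ⟨T, ⟨hTab, hT⟩, hleast⟩ :=
    (isCompact_Icc.inter_right (isClosed_singleton.preimage hg)).exists_isLeast
      (hzero b hab hb)
  have hTa : a < T := hTab.1.lt_of_ne (by rintro rfl; simp_all)
  refine ⟨T, ⟨hTa, hTab.2⟩, hT, fun u hu => ?_⟩
  by_contra! hgu
  obtain ⟨v, hv, hgv⟩ := hzero u hu.1 hgu
  have := hleast ⟨⟨hv.1, hv.2.trans (hu.2.le.trans hTab.2)⟩, hgv⟩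
  linarith [hv.2, hu.2]

/-- The incomplete elliptic integral of the first kind `F(s, i)`. -/
noncomputable def ellipticF (s : ℝ) : ℝ := ∫ θ in (0 : ℝ)..s, 1 / √(1 + sin θ ^ 2)

lemma hasDerivAt_ellipticF (s : ℝ) : HasDerivAt ellipticF (1 / √(1 + sin s ^ 2)) s := by
  have hcont : Continuous fun θ => 1 / √(1 + sin θ ^ 2) :=
    continuous_const.div (by fun_prop) fun θ => (sqrt_pos.2 (by positivity)).ne'
  exact intervalIntegral.integral_hasDerivAt_right (hcont.intervalIntegrable _ _)
    (hcont.stronglyMeasurableAtFilter _ _) hcont.continuousAt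

lemma ellipticF_zero : ellipticF 0 = 0 := intervalIntegral.integral_same

lemma monotone_ellipticF : Monotone ellipticF :=
  monotone_of_hasDerivAt_nonneg hasDerivAt_ellipticF fun _ => by positivity

def IsSnSolution (y yd : ℝ → ℝ) : Prop :=
  ∀ u, HasDerivAt y (yd u) u ∧ HasDerivAt yd (-2 * y u ^ 3) u

namespace IsSnSolution

variable {y yd : ℝ → ℝ}

lemma comp_const_sub (h : IsSnSolution y yd) (c : ℝ) :
    IsSnSolution (fun t => y (c - t)) (fun t => -yd (c - t)) := by
  intro t
  have hc : HasDerivAt (fun t => c - t) (-1) t := by simpa using (hasDerivAt_id t).const_sub c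
  exact ⟨((h (c - t)).1.comp t hc).congr_deriv (by ring),
    ((h (c - t)).2.comp t hc).neg.congr_deriv (by ring)⟩

lemma neg (h : IsSnSolution y yd) : IsSnSolution (fun t => -y t) (fun t => -yd t) := by
  intro t
  exact ⟨(h t).1.neg, (h t).2.neg.congr_deriv (by ring)⟩

lemma continuous (h : IsSnSolution y yd) : Continuous y :=
  continuous_iff_continuousAt.2 fun u => (h u).1.continuousAt

lemma continuous_deriv (h : IsSnSolution y yd) : Continuous yd :=
  continuous_iff_continuousAt.2 fun u => (h u).2.continuousAt

lemma energy_eq (h : IsSnSolution y yd) (u v : ℝ) :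
    yd u ^ 2 + y u ^ 4 = yd v ^ 2 + y v ^ 4 := by
  have hE : ∀ t, HasDerivAt (fun t => yd t ^ 2 + y t ^ 4) 0 t := fun t =>
    (((h t).2.pow 2).add ((h t).1.pow 4)).congr_deriv (by norm_num; ring)
  exact is_const_of_deriv_eq_zero (fun t => (hE t).differentiableAt) (fun t => (hE t).deriv) u v

lemma energy_eq_one (h : IsSnSolution y yd) (h0 : y 0 = 0) (hd0 : yd 0 = 1) (u : ℝ) :
    yd u ^ 2 + y u ^ 4 = 1 := by
  simpa [h0, hd0] using h.energy_eq u 0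

lemma abs_le_one (h : IsSnSolution y yd) (h0 : y 0 = 0) (hd0 : yd 0 = 1) (u : ℝ) :
    |y u| ≤ 1 := by
  have := h.energy_eq_one h0 hd0 u
  rw [← sq_le_one_iff_abs_le_one]
  nlinarith [sq_nonneg (yd u), sq_nonneg (y u ^ 2 - 1)]

lemma unique {y₁ yd₁ y₂ yd₂ : ℝ → ℝ} (h₁ : IsSnSolution y₁ yd₁) (h₂ : IsSnSolution y₂ yd₂)
    (hb₁ : ∀ u, |y₁ u| ≤ 1) (hb₂ : ∀ u, |y₂ u| ≤ 1) {t₀ : ℝ} (hy : y₁ t₀ = y₂ t₀)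
    (hyd : yd₁ t₀ = yd₂ t₀) : y₁ = y₂ := by
  have hsol : ∀ {y yd : ℝ → ℝ}, IsSnSolution y yd → (∀ u, |y u| ≤ 1) → ∀ t,
      HasDerivAt (fun t => (y t, yd t)) (snField (y t, yd t)) t ∧
        (y t, yd t) ∈ Icc (-1) 1 ×ˢ univ :=
    fun h hb t => ⟨(h t).1.prodMk (h t).2, abs_le.mp (hb t), trivial⟩
  have := ODE_solution_unique_univ (fun _ => lipschitzOnWith_snField) (hsol h₁ hb₁) (hsol h₂ hb₂)
    (Prod.ext hy hyd)
  exact funext fun t => congrArg Prod.fst (congrFun this t)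

lemma apply_two_mul_sub_of_apply_eq_zero (h : IsSnSolution y yd) (hb : ∀ u, |y u| ≤ 1)
    {c : ℝ} (hc : y c = 0) (u : ℝ) : y (2 * c - u) = -y u := by
  have hrefl := (h.comp_const_sub (2 * c)).neg
  have := hrefl.unique h (fun t => by simpa using hb (2 * c - t)) hb (t₀ := c)
    (by simp [two_mul, hc]) (by simp [two_mul])
  linarith [congrFun this u]

lemma apply_two_mul_sub_of_deriv_eq_zero (h : IsSnSolution y yd) (hb : ∀ u, |y u| ≤ 1)
    {c : ℝ} (hc : yd c = 0) (u : ℝ) : y (2 * c - u) = y u := by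
  have := (h.comp_const_sub (2 * c)).unique h (fun t => hb (2 * c - t)) hb (t₀ := c)
    (by simp [two_mul]) (by simp [two_mul, hc])
  exact congrFun this u

lemma hasDerivAt_ellipticF_arcsin (h : IsSnSolution y yd) {x : ℝ}
    (hE : yd x ^ 2 + y x ^ 4 = 1) (hx : 0 < yd x) :
    HasDerivAt (fun u => ellipticF (arcsin (y u))) 1 x := by
  have hy : y x ^ 2 < 1 := by nlinarith [sq_nonneg (y x), sq_nonneg (y x ^ 2 - 1)]
  obtain ⟨hy₁, hy₂⟩ := abs_lt.mp ((sq_lt_one_iff_abs_lt_one _).mp hy)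
  refine ((hasDerivAt_ellipticF _).comp x
    ((hasDerivAt_arcsin hy₁.ne' hy₂.ne).comp x (h x).1)).congr_deriv ?_
  have hroot : √(1 + y x ^ 2) * √(1 - y x ^ 2) = yd x := by
    rw [← sqrt_mul (by positivity), ← sqrt_sq hx.le]
    congr 1
    linear_combination -hE
  have : 0 < √(1 - y x ^ 2) := sqrt_pos.2 (by linarith)
  rw [Function.comp_apply, sin_arcsin hy₁.le hy₂.le]
  field_simp
  linarith

lemma ellipticF_arcsin_eq (h : IsSnSolution y yd) (h0 : y 0 = 0) (hd0 : yd 0 = 1) {T : ℝ}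
    (hT : 0 ≤ T) (hpos : ∀ u ∈ Ico 0 T, 0 < yd u) : ellipticF (arcsin (y T)) = T := by
  have hcont : Continuous fun u => ellipticF (arcsin (y u)) :=
    (continuous_iff_continuousAt.2 fun s => (hasDerivAt_ellipticF s).continuousAt).comp
      (continuous_arcsin.comp h.continuous)
  exact eq_of_has_deriv_right_eq (f' := fun _ => 1)
    (fun u hu => (h.hasDerivAt_ellipticF_arcsin (h.energy_eq_one h0 hd0 u)
      (hpos u hu)).hasDerivWithinAt)
    (fun u _ => (hasDerivAt_id u).hasDerivWithinAt) hcont.continuousOn continuousOn_id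
    (by simp [h0, ellipticF_zero]) T ⟨hT, le_rfl⟩

lemma apply_ellipticF_pi_div_two (h : IsSnSolution y yd) (h0 : y 0 = 0) (hd0 : yd 0 = 1) :
    y (ellipticF (π / 2)) = 1 ∧ yd (ellipticF (π / 2)) = 0 := by
  have hle : ∀ T, 0 ≤ T → (∀ u ∈ Ico 0 T, 0 < yd u) → T ≤ ellipticF (π / 2) :=
    fun T hT hpos => h.ellipticF_arcsin_eq h0 hd0 hT hpos ▸
      monotone_ellipticF (arcsin_le_pi_div_two _)
  obtain ⟨b, hb0, hb⟩ : ∃ b, 0 ≤ b ∧ yd b ≤ 0 := by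
    by_contra! hpos
    have hF0 := hle 0 le_rfl (by simp)
    linarith [hle (ellipticF (π / 2) + 1) (by linarith) fun u hu => hpos u hu.1]
  obtain ⟨T, hT, hydT, hpos⟩ := exists_first_zero h.continuous_deriv hb0 (hd0 ▸ one_pos) hb
  have hTF := h.ellipticF_arcsin_eq h0 hd0 hT.1.le hpos
  have hyT : y T ^ 4 = 1 := by simpa [hydT] using h.energy_eq_one h0 hd0 T
  rcases (pow_eq_one_iff_of_ne_zero (by norm_num)).mp hyT with hyT | ⟨hyT, -⟩
  · rw [hyT, arcsin_one] at hTF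
    exact hTF ▸ ⟨hyT, hydT⟩
  · rw [hyT, arcsin_neg_one] at hTF
    have := monotone_ellipticF (neg_nonpos.2 pi_div_two_pos.le)
    rw [ellipticF_zero] at this
    linarith [hT.1]

end IsSnSolution

theorem sn_symmetries
    (y yd : ℝ → ℝ)
    (hy : ∀ u : ℝ, HasDerivAt y (yd u) u)
    (hyd : ∀ u : ℝ, HasDerivAt yd (-2 * y u ^ 3) u)
    (hy0 : y 0 = 0) (hyd0 : yd 0 = 1)
    (K : ℝ) (hK : K = ∫ θ in (0:ℝ)..(π / 2), 1 / Real.sqrt (1 + Real.sin θ ^ 2)) :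
    ∀ u : ℝ, y (-u) = -y u ∧ y (2 * K - u) = y u ∧ y (u + 4 * K) = y u := by
  have h : IsSnSolution y yd := fun u => ⟨hy u, hyd u⟩
  have hb := h.abs_le_one hy0 hyd0
  replace hK : K = ellipticF (π / 2) := hK
  subst hK
  have hodd (u : ℝ) : y (2 * 0 - u) = -y u := h.apply_two_mul_sub_of_apply_eq_zero hb hy0 u
  have hsymm := h.apply_two_mul_sub_of_deriv_eq_zero hb (h.apply_ellipticF_pi_div_two hy0 hyd0).2
  have hper := (Function.antiperiodic_of_apply_two_mul_sub hodd hsymm).periodic_two_mul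
  intro u
  refine ⟨by simpa using hodd u, hsymm u, ?_⟩
  convert hper u using 2
  ring
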